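/- arXiv:1907.12676 — 2 statements merged into one kernel-verified Lean document; each statement's English description precedes it below -/
import Mathlib

section
/- Let α ∈ (0,2], M > 0, d ≥ 1, and ξ ∈ ℝ^d with ‖ξ‖² > M^{2/α}. Then (‖ξ‖² + M^{2/α})^{α/2} − M ≥ (α / 2^{2 − α/2}) · ‖ξ‖^α. -/
/-!
Write `p = α/2`, `m = M^{2/α}` and `x = ‖ξ‖²`, so that `M = m^p`, `‖ξ‖^α = x^p` and the constant is
`α / 2^{2-p} = p 2^{p-1}`. Concavity of `t ↦ t^p` puts its graph below the tangent at `x + m`, so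
`(x+m)^p - m^p ≥ p x (x+m)^{p-1}`; in the high-frequency regime `x + m ≤ 2x`, and since `p - 1 ≤ 0`
this is at least `p x (2x)^{p-1} = p 2^{p-1} x^p`.
-/

open Real

namespace Real

/-- Tangent-line bound for the concave function `t ↦ t ^ p`, `0 ≤ p ≤ 1`. -/
lemma rpow_le_rpow_add_mul_sub_mul_rpow_sub_one {a b p : ℝ} (ha : 0 ≤ a) (hb : 0 < b)
    (hp₀ : 0 ≤ p) (hp₁ : p ≤ 1) : a ^ p ≤ b ^ p + p * (a - b) * b ^ (p - 1) := by
  have bernoulli := rpow_one_add_le_one_add_mul_self (s := a / b - 1)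
    (by linarith [div_nonneg ha hb.le]) hp₀ hp₁
  rw [add_sub_cancel, div_rpow ha hb.le, div_le_iff₀ (rpow_pos_of_pos hb p)] at bernoulli
  calc a ^ p ≤ (1 + p * (a / b - 1)) * b ^ p := bernoulli
    _ = b ^ p + p * (a - b) * (b ^ p / b) := by field_simp
    _ = b ^ p + p * (a - b) * b ^ (p - 1) := by rw [rpow_sub_one hb.ne']

lemma mul_two_rpow_sub_one_mul_rpow_le_add_rpow_sub_rpow {x m p : ℝ} (hm : 0 ≤ m) (hx : 0 < x)
    (hmx : m ≤ x) (hp₀ : 0 ≤ p) (hp₁ : p ≤ 1) :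
    p * 2 ^ (p - 1) * x ^ p ≤ (x + m) ^ p - m ^ p := by
  have hxm : 0 < x + m := by linarith
  have tangent := rpow_le_rpow_add_mul_sub_mul_rpow_sub_one hm hxm hp₀ hp₁
  have mono : (2 * x) ^ (p - 1) ≤ (x + m) ^ (p - 1) :=
    rpow_le_rpow_of_nonpos hxm (by linarith) (by linarith)
  calc p * 2 ^ (p - 1) * x ^ p = p * x * (2 * x) ^ (p - 1) := by
        rw [mul_rpow zero_le_two hx.le, rpow_sub_one hx.ne']; field_simp
    _ ≤ p * x * (x + m) ^ (p - 1) := by gcongr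
    _ ≤ (x + m) ^ p - m ^ p := by linarith

lemma two_mul_div_two_rpow_two_sub (p : ℝ) : 2 * p / (2 : ℝ) ^ (2 - p) = p * 2 ^ (p - 1) := by
  rw [rpow_sub two_pos, rpow_sub_one two_ne_zero, rpow_two]
  field_simp

end Real

theorem stmt3_general (α M : ℝ) (hα0 : 0 < α) (hα2 : α ≤ 2) (hM : 0 < M)
    (d : ℕ) (ξ : EuclideanSpace ℝ (Fin d))
    (hξ : ‖ξ‖ ^ 2 > M ^ (2 / α)) :
    (‖ξ‖ ^ 2 + M ^ (2 / α)) ^ (α / 2) - M ≥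
      α / (2 : ℝ) ^ (2 - α / 2) * ‖ξ‖ ^ α := by
  have hM_eq : M = (M ^ (2 / α)) ^ (α / 2) := by
    rw [← rpow_mul hM.le, div_mul_div_cancel₀' two_ne_zero, div_self hα0.ne', rpow_one]
  have hξ_eq : ‖ξ‖ ^ α = (‖ξ‖ ^ 2) ^ (α / 2) := by
    rw [← rpow_natCast, ← rpow_mul (norm_nonneg ξ), Nat.cast_ofNat, mul_div_cancel₀ α two_ne_zero]
  have hconst : α / (2 : ℝ) ^ (2 - α / 2) = α / 2 * 2 ^ (α / 2 - 1) := by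
    rw [← two_mul_div_two_rpow_two_sub, mul_div_cancel₀ α two_ne_zero]
  have hm := rpow_pos_of_pos hM (2 / α)
  rw [hξ_eq, hconst]
  nth_rw 2 [hM_eq]
  exact mul_two_rpow_sub_one_mul_rpow_le_add_rpow_sub_rpow hm.le (hm.trans hξ) hξ.le
    (by positivity) (by linarith)

/-- High-frequency (α-stable) regime bound: if `‖ξ‖² > M^{2/α}` then
`(‖ξ‖² + M^{2/α})^{α/2} − M ≥ (α / 2^{2−α/2}) ‖ξ‖^α`. -/
theorem stmt3 (α M : ℝ) (hα0 : 0 < α) (hα2 : α ≤ 2) (hM : 0 < M)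
    (d : ℕ) (hd : 1 ≤ d) (ξ : EuclideanSpace ℝ (Fin d))
    (hξ : ‖ξ‖ ^ 2 > M ^ (2 / α)) :
    (‖ξ‖ ^ 2 + M ^ (2 / α)) ^ (α / 2) - M ≥
      α / (2 : ℝ) ^ (2 - α / 2) * ‖ξ‖ ^ α :=
  stmt3_general α M hα0 hα2 hM d ξ hξ
end

section
/- Fix α ∈ (0,2] and d ≥ 1. For M > 0, t > 0 and x, y ∈ ℝ^d define the relativistic stable transition kernel p_t^M(x,y) = (2π)^{−d} ∫_{ℝ^d} exp(i (x−y)·ξ) · exp(−t·((M^{2/α} + ‖ξ‖²)^{α/2} − M)) dξ. Then there exists a constant c₁ > 0, depending only on α and d, such that for all M > 0, all t > 0 and all x, y ∈ ℝ^d, ‖p_t^M(x,y)‖ ≤ c₁ · (M^{d/α − d/2} · t^{−d/2} + t^{−d/α}). -/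
/-!
With `m = M ^ (2/α)` and `β = α/2 ≤ 1`, the modulus of the integrand is
`exp (-t ((m + ‖ξ‖²) ^ β - m ^ β))`. Concavity of `x ↦ x ^ β` gives
`(m + s) ^ β - m ^ β ≳ s ^ β` for `s ≥ m` and `≳ m ^ (β - 1) s` for `s ≤ m`, so the modulus is
dominated by `exp (-c t ‖ξ‖ ^ α) + exp (-c t M ^ (1 - 2/α) ‖ξ‖²)`. By scaling, these two
integrate to multiples of `t ^ (-d/α)` and `M ^ (d/α - d/2) t ^ (-d/2)`.
-/

open MeasureTheory Real Module

section
variable {β m s : ℝ}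

theorem one_sub_two_rpow_neg_mul_rpow_le_rpow_add_sub_rpow (hβ : 0 ≤ β) (hm : 0 ≤ m)
    (hms : m ≤ s) : (1 - 2 ^ (-β)) * s ^ β ≤ (m + s) ^ β - m ^ β := by
  have hmid : m ^ β ≤ 2 ^ (-β) * (m + s) ^ β := by
    rw [rpow_neg zero_le_two, ← div_eq_inv_mul, ← div_rpow (by linarith) zero_le_two]
    exact rpow_le_rpow hm (by linarith) hβ
  have hs : s ^ β ≤ (m + s) ^ β := rpow_le_rpow (by linarith) (by linarith) hβ
  have hc : 0 ≤ 1 - (2 : ℝ) ^ (-β) :=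
    sub_nonneg.2 (rpow_le_one_of_one_le_of_nonpos one_le_two (by linarith))
  nlinarith

theorem two_rpow_sub_one_mul_le_rpow_add_sub_rpow (hβ0 : 0 ≤ β) (hβ1 : β ≤ 1) (hm : 0 < m)
    (hs : 0 ≤ s) (hsm : s ≤ m) : (2 ^ β - 1) * (m ^ (β - 1) * s) ≤ (m + s) ^ β - m ^ β := by
  have hconc := (concaveOn_rpow hβ0 hβ1).2 (Set.mem_Ici.2 hm.le)
    (Set.mem_Ici.2 (by linarith : (0 : ℝ) ≤ 2 * m)) (sub_nonneg.2 (div_le_one_of_le₀ hsm hm.le))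
    (div_nonneg hs hm.le) (sub_add_cancel 1 (s / m))
  have hcomb : (1 - s / m) * m + s / m * (2 * m) = m + s := by field_simp; ring
  simp only [smul_eq_mul] at hconc
  rw [hcomb, mul_rpow zero_le_two hm.le] at hconc
  rw [rpow_sub_one hm.ne']
  have : (1 - s / m) * m ^ β + s / m * (2 ^ β * m ^ β) =
      m ^ β + (2 ^ β - 1) * (m ^ β / m * s) := by
    field_simp; ring
  linarith

theorem exp_neg_mul_rpow_add_sub_rpow_le (hβ0 : 0 ≤ β) (hβ1 : β ≤ 1) (hm : 0 < m) (hs : 0 ≤ s)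
    {t : ℝ} (ht : 0 ≤ t) :
    rexp (-(t * ((m + s) ^ β - m ^ β))) ≤
      rexp (-(t * (1 - 2 ^ (-β)) * s ^ β)) + rexp (-(t * (1 - 2 ^ (-β)) * m ^ (β - 1) * s)) := by
  rcases le_total m s with hms | hsm
  · refine le_add_of_le_of_nonneg (exp_le_exp.2 (neg_le_neg ?_)) (exp_pos _).le
    rw [mul_assoc]
    exact mul_le_mul_of_nonneg_left
      (one_sub_two_rpow_neg_mul_rpow_le_rpow_add_sub_rpow hβ0 hm.le hms) ht
  · refine le_add_of_nonneg_of_le (exp_pos _).le (exp_le_exp.2 (neg_le_neg ?_))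
    have hc : 1 - (2 : ℝ) ^ (-β) ≤ 2 ^ β - 1 := by
      have h1 : (1 : ℝ) ≤ 2 ^ β := one_le_rpow one_le_two hβ0
      have h2 : (2 : ℝ) ^ β * 2 ^ (-β) = 1 := by
        rw [← rpow_add two_pos, add_neg_cancel, rpow_zero]
      nlinarith [rpow_pos_of_pos two_pos (-β)]
    rw [mul_assoc, mul_assoc]
    exact mul_le_mul_of_nonneg_left ((mul_le_mul_of_nonneg_right hc
      (mul_nonneg (rpow_nonneg hm.le _) hs)).trans
        (two_rpow_sub_one_mul_le_rpow_add_sub_rpow hβ0 hβ1 hm hs hsm)) ht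

end

theorem exp_neg_mul_relativistic_exponent_le {α M t r : ℝ} (hα0 : 0 < α) (hα2 : α ≤ 2)
    (hM : 0 < M) (ht : 0 ≤ t) (hr : 0 ≤ r) :
    rexp (-(t * ((M ^ (2 / α) + r ^ 2) ^ (α / 2) - M))) ≤
      rexp (-(t * (1 - 2 ^ (-(α / 2))) * r ^ α)) +
        rexp (-(t * (1 - 2 ^ (-(α / 2))) * M ^ (1 - 2 / α) * r ^ (2 : ℝ))) := by
  have hm : (M ^ (2 / α)) ^ (α / 2) = M := by
    rw [← rpow_mul hM.le, show 2 / α * (α / 2) = 1 by field_simp, rpow_one]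
  have hs : (r ^ 2) ^ (α / 2) = r ^ α := by
    rw [← rpow_natCast, ← rpow_mul hr, Nat.cast_ofNat, mul_div_cancel₀ α two_ne_zero]
  have hm' : (M ^ (2 / α)) ^ (α / 2 - 1) = M ^ (1 - 2 / α) := by
    rw [← rpow_mul hM.le, show 2 / α * (α / 2 - 1) = 1 - 2 / α by field_simp]
  have h := exp_neg_mul_rpow_add_sub_rpow_le (β := α / 2) (by positivity) (by linarith)
    (rpow_pos_of_pos hM (2 / α)) (sq_nonneg r) ht
  rw [rpow_two]
  rwa [hm, hs, hm'] at h

namespace MeasureTheory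

variable {E : Type*} [NormedAddCommGroup E] [NormedSpace ℝ E] [FiniteDimensional ℝ E]
  [MeasurableSpace E] [BorelSpace E] (μ : Measure E) [μ.IsAddHaarMeasure] {b p : ℝ}

theorem integrable_exp_neg_mul_norm_rpow (hb : 0 < b) (hp : 0 < p) :
    Integrable (fun x : E ↦ rexp (-(b * ‖x‖ ^ p))) μ := by
  rcases subsingleton_or_nontrivial E with hE | hE
  · exact (integrable_const (rexp (-(b * ‖(0 : E)‖ ^ p)))).congr
      (Filter.Eventually.of_forall fun x ↦ by rw [Subsingleton.elim x 0])
  · refine (integrable_fun_norm_addHaar μ (f := fun r ↦ rexp (-(b * r ^ p)))).2 ?_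
    refine (integrableOn_rpow_mul_exp_neg_mul_rpow (s := (finrank ℝ E - 1 : ℕ))
      (neg_one_lt_zero.trans_le (Nat.cast_nonneg _)) hp hb).congr_fun (fun r _ ↦ ?_)
      measurableSet_Ioi
    simp only [rpow_natCast, smul_eq_mul, neg_mul]

theorem integral_exp_neg_mul_norm_rpow (hb : 0 < b) (hp : 0 < p) :
    ∫ x : E, rexp (-(b * ‖x‖ ^ p)) ∂μ =
      b ^ (-(finrank ℝ E : ℝ) / p) * ∫ x : E, rexp (-‖x‖ ^ p) ∂μ := by
  have hR : 0 ≤ b ^ p⁻¹ := by positivity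
  have hscale : ∀ x : E, b * ‖x‖ ^ p = ‖b ^ p⁻¹ • x‖ ^ p := fun x ↦ by
    rw [norm_smul, norm_of_nonneg hR, mul_rpow hR (norm_nonneg x), ← rpow_mul hb.le,
      inv_mul_cancel₀ hp.ne', rpow_one]
  simp_rw [hscale]
  rw [Measure.integral_comp_smul_of_nonneg μ (fun x : E ↦ rexp (-‖x‖ ^ p)) _ (hR := hR),
    smul_eq_mul, ← rpow_natCast, ← rpow_mul hb.le, ← rpow_neg hb.le, neg_div, div_eq_inv_mul]

theorem exists_integral_exp_neg_relativistic_le {α : ℝ} (hα0 : 0 < α) (hα2 : α ≤ 2) :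
    ∃ A B : ℝ, 0 < A ∧ 0 < B ∧ ∀ M : ℝ, 0 < M → ∀ t : ℝ, 0 < t →
      ∫ ξ : E, rexp (-(t * ((M ^ (2 / α) + ‖ξ‖ ^ 2) ^ (α / 2) - M))) ∂μ ≤
        A * (M ^ ((finrank ℝ E : ℝ) / α - finrank ℝ E / 2) * t ^ (-(finrank ℝ E : ℝ) / 2)) +
          B * t ^ (-(finrank ℝ E : ℝ) / α) := by
  set n : ℝ := (finrank ℝ E : ℝ)
  set c : ℝ := 1 - 2 ^ (-(α / 2))
  have hc : 0 < c := sub_pos.2 (rpow_lt_one_of_one_lt_of_neg one_lt_two (by linarith))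
  have hK : ∀ p : ℝ, 0 < p → 0 < ∫ x : E, rexp (-‖x‖ ^ p) ∂μ := fun p hp ↦
    integral_exp_pos (by simpa using integrable_exp_neg_mul_norm_rpow μ one_pos hp)
  refine ⟨c ^ (-n / 2) * ∫ x : E, rexp (-‖x‖ ^ (2 : ℝ)) ∂μ,
    c ^ (-n / α) * ∫ x : E, rexp (-‖x‖ ^ α) ∂μ,
    mul_pos (rpow_pos_of_pos hc _) (hK 2 two_pos), mul_pos (rpow_pos_of_pos hc _) (hK α hα0),
    fun M hM t ht ↦ ?_⟩
  have hint₁ := integrable_exp_neg_mul_norm_rpow μ (mul_pos ht hc) hα0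
  have hint₂ := integrable_exp_neg_mul_norm_rpow μ
    (mul_pos (mul_pos ht hc) (rpow_pos_of_pos hM (1 - 2 / α))) two_pos
  calc ∫ ξ : E, rexp (-(t * ((M ^ (2 / α) + ‖ξ‖ ^ 2) ^ (α / 2) - M))) ∂μ
      ≤ ∫ ξ : E, (rexp (-(t * c * ‖ξ‖ ^ α)) +
          rexp (-(t * c * M ^ (1 - 2 / α) * ‖ξ‖ ^ (2 : ℝ)))) ∂μ :=
        integral_mono_of_nonneg (ae_of_all _ fun _ ↦ (exp_pos _).le) (hint₁.add hint₂)
          (ae_of_all _ fun ξ ↦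
            exp_neg_mul_relativistic_exponent_le hα0 hα2 hM ht.le (norm_nonneg ξ))
    _ = (t * c * M ^ (1 - 2 / α)) ^ (-n / 2) * (∫ x : E, rexp (-‖x‖ ^ (2 : ℝ)) ∂μ) +
          (t * c) ^ (-n / α) * ∫ x : E, rexp (-‖x‖ ^ α) ∂μ := by
        rw [integral_add hint₁ hint₂, integral_exp_neg_mul_norm_rpow μ (by positivity) hα0,
          integral_exp_neg_mul_norm_rpow μ (by positivity) two_pos, add_comm]
    _ = _ := by
        rw [mul_rpow (by positivity) (by positivity), mul_rpow ht.le hc.le, mul_rpow ht.le hc.le,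
          ← rpow_mul hM.le, show (1 - 2 / α) * (-n / 2) = n / α - n / 2 by field_simp; ring]
        ring

end MeasureTheory

theorem stmt6_general (α : ℝ) (hα0 : 0 < α) (hα2 : α ≤ 2) (d : ℕ) :
    ∃ c₁ : ℝ, 0 < c₁ ∧ ∀ M : ℝ, 0 < M → ∀ t : ℝ, 0 < t →
      ∀ x y : EuclideanSpace ℝ (Fin d),
        ‖(((((2 * Real.pi) ^ d)⁻¹ : ℝ) : ℂ) *
            ∫ ξ : EuclideanSpace ℝ (Fin d),
              Complex.exp (Complex.I * ((inner ℝ (x - y) ξ : ℝ) : ℂ)) *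
                Complex.exp (-(((t * ((M ^ (2 / α) + ‖ξ‖ ^ 2) ^ (α / 2) - M)) : ℝ) : ℂ)))‖ ≤
          c₁ * (M ^ ((d : ℝ) / α - (d : ℝ) / 2) * t ^ (-(d : ℝ) / 2) + t ^ (-(d : ℝ) / α)) := by
  obtain ⟨A, B, hA, hB, hbound⟩ :=
    exists_integral_exp_neg_relativistic_le (volume : Measure (EuclideanSpace ℝ (Fin d))) hα0 hα2
  simp only [finrank_euclideanSpace_fin] at hbound
  refine ⟨((2 * π) ^ d)⁻¹ * max A B, by positivity, fun M hM t ht x y ↦ ?_⟩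
  rw [norm_mul, Complex.norm_real, norm_of_nonneg (by positivity), mul_assoc]
  refine mul_le_mul_of_nonneg_left ?_ (by positivity)
  have hX : 0 ≤ M ^ ((d : ℝ) / α - d / 2) * t ^ (-(d : ℝ) / 2) := by positivity
  have hY : 0 ≤ t ^ (-(d : ℝ) / α) := by positivity
  calc _ ≤ ∫ ξ : EuclideanSpace ℝ (Fin d), rexp (-(t * ((M ^ (2 / α) + ‖ξ‖ ^ 2) ^ (α / 2) - M))) :=
        (norm_integral_le_integral_norm _).trans_eq
          (integral_congr_ae (ae_of_all _ fun ξ ↦ by simp [Complex.norm_exp]))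
    _ ≤ A * (M ^ ((d : ℝ) / α - d / 2) * t ^ (-(d : ℝ) / 2)) + B * t ^ (-(d : ℝ) / α) :=
        hbound M hM t ht
    _ ≤ max A B * (M ^ ((d : ℝ) / α - d / 2) * t ^ (-(d : ℝ) / 2) + t ^ (-(d : ℝ) / α)) := by
        rw [mul_add]
        exact add_le_add (mul_le_mul_of_nonneg_right (le_max_left A B) hX)
          (mul_le_mul_of_nonneg_right (le_max_right A B) hY)

/-- Theorem 2.1 of the paper: the relativistic stable transition kernel
`p_t^M(x,y) = (2π)^{−d} ∫ exp(i(x−y)·ξ) exp(−t((M^{2/α}+‖ξ‖²)^{α/2}−M)) dξ`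
satisfies `‖p_t^M(x,y)‖ ≤ c₁ (M^{d/α−d/2} t^{−d/2} + t^{−d/α})` with `c₁ = c₁(α,d) > 0`. -/
theorem stmt6 (α : ℝ) (hα0 : 0 < α) (hα2 : α ≤ 2) (d : ℕ) (hd : 1 ≤ d) :
    ∃ c₁ : ℝ, 0 < c₁ ∧ ∀ M : ℝ, 0 < M → ∀ t : ℝ, 0 < t →
      ∀ x y : EuclideanSpace ℝ (Fin d),
        ‖(((((2 * Real.pi) ^ d)⁻¹ : ℝ) : ℂ) *
            ∫ ξ : EuclideanSpace ℝ (Fin d),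
              Complex.exp (Complex.I * ((inner ℝ (x - y) ξ : ℝ) : ℂ)) *
                Complex.exp (-(((t * ((M ^ (2 / α) + ‖ξ‖ ^ 2) ^ (α / 2) - M)) : ℝ) : ℂ)))‖ ≤
          c₁ * (M ^ ((d : ℝ) / α - (d : ℝ) / 2) * t ^ (-(d : ℝ) / 2) + t ^ (-(d : ℝ) / α)) :=
  stmt6_general α hα0 hα2 d
end
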